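/- arXiv:2503.07319 — 2 statements merged into one kernel-verified Lean document; each statement's English description precedes it below -/
import Mathlib

section
/- With the hypotheses of the policy improvement monotonicity setting, defining g_i = r^n_i + γ(P^n v^m)_i − (r^m_i + γ(P^m v^m)_i), the difference of values satisfies v^n − v^m = (I − γP^n)⁻¹ g; consequently if g ≥ 0 componentwise then v^n ≥ v^m componentwise. -/
/-!
A row-stochastic `P` has `ℓ∞`-operator norm at most `1`, so for `0 ≤ γ < 1` the Neumann series
`∑ₖ (γP)ᵏ` converges to `(1 - γP)⁻¹`, which is therefore an entrywise nonnegative matrix.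
Both values satisfy the Bellman equation `v = r + γPv`, and this makes `g = (1 - γPⁿ)(vⁿ - vᵐ)`.
-/

open Matrix

attribute [local instance] Matrix.linftyOpNormedRing Matrix.linftyOpNormedAlgebra

namespace Matrix

variable {n : Type*} [Fintype n] [DecidableEq n] {P : Matrix n n ℝ} {γ : ℝ}

lemma linfty_opNorm_le_one_of_mem_rowStochastic (hP : P ∈ rowStochastic ℝ n) : ‖P‖ ≤ 1 := by
  rw [linfty_opNorm_def, ← NNReal.coe_one, NNReal.coe_le_coe]
  refine Finset.sup_le fun i _ => le_of_eq ?_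
  rw [← NNReal.coe_inj, NNReal.coe_sum, NNReal.coe_one, ← sum_row_of_mem_rowStochastic hP i]
  exact Finset.sum_congr rfl fun j _ => Real.norm_of_nonneg (nonneg_of_mem_rowStochastic hP)

lemma norm_smul_lt_one_of_mem_rowStochastic (hP : P ∈ rowStochastic ℝ n) (hγ0 : 0 ≤ γ)
    (hγ1 : γ < 1) : ‖γ • P‖ < 1 :=
  calc ‖γ • P‖ ≤ ‖γ‖ * ‖P‖ := norm_smul_le γ P
    _ ≤ γ * 1 := by
      rw [Real.norm_of_nonneg hγ0]
      exact mul_le_mul_of_nonneg_left (linfty_opNorm_le_one_of_mem_rowStochastic hP) hγ0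
    _ < 1 := by linarith

lemma isUnit_det_one_sub_smul_of_mem_rowStochastic (hP : P ∈ rowStochastic ℝ n) (hγ0 : 0 ≤ γ)
    (hγ1 : γ < 1) : IsUnit (1 - γ • P).det :=
  (isUnit_iff_isUnit_det _).1 <|
    isUnit_one_sub_of_norm_lt_one (norm_smul_lt_one_of_mem_rowStochastic hP hγ0 hγ1)

lemma hasSum_pow_inv_one_sub_smul_of_mem_rowStochastic (hP : P ∈ rowStochastic ℝ n)
    (hγ0 : 0 ≤ γ) (hγ1 : γ < 1) : HasSum (fun k : ℕ => (γ • P) ^ k) (1 - γ • P)⁻¹ := by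
  rw [nonsing_inv_eq_ringInverse]
  exact hasSum_geom_series_inverse _ (norm_smul_lt_one_of_mem_rowStochastic hP hγ0 hγ1)

lemma inv_one_sub_smul_nonneg_of_mem_rowStochastic (hP : P ∈ rowStochastic ℝ n) (hγ0 : 0 ≤ γ)
    (hγ1 : γ < 1) (i j : n) : 0 ≤ (1 - γ • P)⁻¹ i j := by
  have hsum := hasSum_pow_inv_one_sub_smul_of_mem_rowStochastic hP hγ0 hγ1
  refine (Pi.hasSum.1 (Pi.hasSum.1 hsum i) j).nonneg fun k => ?_
  rw [smul_pow, smul_apply, smul_eq_mul]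
  exact mul_nonneg (pow_nonneg hγ0 k) (nonneg_of_mem_rowStochastic (pow_mem hP k))

lemma eq_add_smul_mulVec_of_eq_inv_mulVec (hP : P ∈ rowStochastic ℝ n) (hγ0 : 0 ≤ γ)
    (hγ1 : γ < 1) {r v : n → ℝ} (hv : v = (1 - γ • P)⁻¹ *ᵥ r) : v = r + γ • P *ᵥ v := by
  have hr : (1 - γ • P) *ᵥ v = r := by
    rw [hv, mulVec_mulVec,
      mul_nonsing_inv _ (isUnit_det_one_sub_smul_of_mem_rowStochastic hP hγ0 hγ1), one_mulVec]
  rw [← hr, sub_mulVec, one_mulVec, smul_mulVec, sub_add_cancel]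

end Matrix

/-- With `g_i = r^n_i + γ(P^n v^m)_i − (r^m_i + γ(P^m v^m)_i)`, the difference
of values satisfies `v^n − v^m = (I − γP^n)⁻¹ g`; consequently if `g ≥ 0`
componentwise then `v^n ≥ v^m` componentwise. -/
theorem stmt4 (N : ℕ) (Pm Pn : Matrix (Fin N) (Fin N) ℝ)
    (hmnonneg : ∀ i j, 0 ≤ Pm i j) (hmrow : ∀ i, ∑ j, Pm i j = 1)
    (hnnonneg : ∀ i j, 0 ≤ Pn i j) (hnrow : ∀ i, ∑ j, Pn i j = 1)
    (γ : ℝ) (hγ0 : 0 ≤ γ) (hγ1 : γ < 1)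
    (rm rn vm vn g : Fin N → ℝ)
    (hvm : vm = (1 - γ • Pm)⁻¹.mulVec rm)
    (hvn : vn = (1 - γ • Pn)⁻¹.mulVec rn)
    (hg : ∀ i, g i = rn i + γ * Pn.mulVec vm i - (rm i + γ * Pm.mulVec vm i)) :
    vn - vm = (1 - γ • Pn)⁻¹.mulVec g ∧ ((∀ i, 0 ≤ g i) → ∀ i, vm i ≤ vn i) := by
  have hPm : Pm ∈ rowStochastic ℝ (Fin N) := mem_rowStochastic_iff_sum.2 ⟨hmnonneg, hmrow⟩
  have hPn : Pn ∈ rowStochastic ℝ (Fin N) := mem_rowStochastic_iff_sum.2 ⟨hnnonneg, hnrow⟩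
  have hbellm := eq_add_smul_mulVec_of_eq_inv_mulVec hPm hγ0 hγ1 hvm
  have hbelln := eq_add_smul_mulVec_of_eq_inv_mulVec hPn hγ0 hγ1 hvn
  have hg_bellman : g = rn + γ • Pn *ᵥ vm - vm := by
    funext i
    have := congrFun hbellm i
    simp only [Pi.add_apply, Pi.sub_apply, Pi.smul_apply, smul_eq_mul] at this ⊢
    rw [hg i, ← this]
  have hdiff : (1 - γ • Pn) *ᵥ (vn - vm) = g := by
    rw [hg_bellman, sub_mulVec, one_mulVec, smul_mulVec, mulVec_sub, smul_sub]
    nth_rewrite 1 [hbelln]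
    abel
  have hsol : vn - vm = (1 - γ • Pn)⁻¹ *ᵥ g := by
    rw [← hdiff, mulVec_mulVec,
      nonsing_inv_mul _ (isUnit_det_one_sub_smul_of_mem_rowStochastic hPn hγ0 hγ1), one_mulVec]
  refine ⟨hsol, fun hg0 i => sub_nonneg.1 ?_⟩
  rw [← Pi.sub_apply, hsol]
  exact dotProduct_nonneg_of_nonneg
    (inv_one_sub_smul_nonneg_of_mem_rowStochastic hPn hγ0 hγ1 i) hg0
end

section
/- Let V : Fin I × Fin J → ℝ have all distinct entries, and suppose there exists m* such that for every j, V(m*, j) = max_i V(i, j) (a dominant row). Then the game has a unique Nash equilibrium (m*, n*) where n* is the argmax of V(m*, ·), and V(m*, n*) = max over all (i,j) of V(i,j). -/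
/-- If there is a dominant row `m*` (maximal in every column), then the game has
a unique Nash equilibrium `(m*, n*)`, where `n*` is the argmax of `V (m*, ·)`,
and the value there is the global maximum. -/
theorem stmt6 (I J : ℕ) (hI : 0 < I) (hJ : 0 < J)
    (V : Fin I × Fin J → ℝ) (hV : Function.Injective V)
    (mstar : Fin I) (hdom : ∀ j i, V (i, j) ≤ V (mstar, j))
    (nstar : Fin J) (hn : ∀ j, V (mstar, j) ≤ V (mstar, nstar)) :
    ((∀ i', V (i', nstar) ≤ V (mstar, nstar)) ∧
        (∀ j', V (mstar, j') ≤ V (mstar, nstar))) ∧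
      (∀ p : Fin I × Fin J,
        ((∀ i', V (i', p.2) ≤ V p) ∧ (∀ j', V (p.1, j') ≤ V p)) →
          p = (mstar, nstar)) ∧
      (∀ p : Fin I × Fin J, V p ≤ V (mstar, nstar)) := by
  refine ⟨⟨fun i' => hdom nstar i', hn⟩, ?_, fun p => (hdom p.2 p.1).trans (hn p.2)⟩
  rintro ⟨i, j⟩ ⟨hc, hr⟩
  have h1 : V (i, j) = V (mstar, j) := le_antisymm (hdom j i) (hc mstar)
  have hi : i = mstar := (Prod.mk.injEq ..).mp (hV h1) |>.1
  subst hi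
  have h2 : V (i, j) = V (i, nstar) := le_antisymm (hn j) (hr nstar)
  have : j = nstar := ((Prod.mk.injEq ..).mp (hV h2)).2
  simp [this]
end
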